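/- There exists a constant c ≥ 1 such that the following holds: for every γ ∈ (0,1], every L₀ > 0, every D > 0, every real K ≥ 1, every function u : ℤ³ → ℂ with u(0) = 0, with Σ_{α ≠ 0} |α|·|u(α)|² ≤ L₀, and with |u(α)| ≤ D/|α|^{2−γ} for all α with |α| ≥ K, and every k ∈ ℤ³ with |k| ≥ 2K, one has Σ_{α ∈ ℤ³, α ≠ 0, 0 < |k−α| ≤ (1/2)·|k|^{1−γ}} |α|·|u(α)|·|u(k−α)| ≤ c·√L₀·D. -/

import Mathlib

/-
Put `b = k - α`. The constraint reads `0 < |b| ≤ R := ½|k|^{1-γ} ≤ |k|/2`, so `|α| ≥ |k|/2 ≥ K`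
and the decay hypothesis gives `|α| |u α| ≤ D / |α|^{1-γ} ≤ D / R`. Cauchy–Schwarz with weights
`|b|` bounds `∑_{0<|b|≤R} |u b|` by `√L₀ (∑_{0<|b|≤R} 1/|b|)^{1/2}`, and summing `1/|b|` over the
shells of the cubes `{b : max |bᵢ| ≤ M}` gives `∑_{0<|b|≤R} 1/|b| ≤ 26 R²`. The factors `R`
cancel, leaving `√26 √L₀ D`.
-/

/-- The Euclidean norm of a lattice point in `ℤ³`. -/
noncomputable def znorm (a : Fin 3 → ℤ) : ℝ := Real.sqrt (∑ i, ((a i : ℝ)) ^ 2)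

open Finset

lemma znorm_nonneg (a : Fin 3 → ℤ) : 0 ≤ znorm a := Real.sqrt_nonneg _

lemma znorm_zero : znorm 0 = 0 := by simp [znorm]

lemma abs_le_znorm (a : Fin 3 → ℤ) (i : Fin 3) : |(a i : ℝ)| ≤ znorm a := by
  rw [znorm, ← Real.sqrt_sq_eq_abs]
  exact Real.sqrt_le_sqrt (single_le_sum (f := fun j => (a j : ℝ) ^ 2)
    (fun j _ => sq_nonneg _) (mem_univ i))

lemma znorm_eq_norm (a : Fin 3 → ℤ) :
    znorm a = ‖(WithLp.toLp 2 fun i => (a i : ℝ) : EuclideanSpace ℝ (Fin 3))‖ := by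
  simp [znorm, EuclideanSpace.norm_eq]

lemma znorm_le_znorm_sub_add (a b : Fin 3 → ℤ) : znorm a ≤ znorm (a - b) + znorm b := by
  have hsub : (fun i => ((a - b) i : ℝ)) = (fun i => (a i : ℝ)) - fun i => (b i : ℝ) := by
    ext; simp
  simp only [znorm_eq_norm]
  rw [hsub, WithLp.toLp_sub]
  exact norm_le_norm_sub_add _ _

noncomputable def cube (M : ℕ) : Finset (Fin 3 → ℤ) := Fintype.piFinset fun _ => Icc (-(M : ℤ)) M

lemma card_cube (M : ℕ) : #(cube M) = (2 * M + 1) ^ 3 := by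
  rw [cube, Fintype.card_piFinset, Fin.prod_const, Int.card_Icc]
  congr 1
  omega

lemma cube_mono {M N : ℕ} (h : M ≤ N) : cube M ⊆ cube N :=
  Fintype.piFinset_subset _ _ fun _ => Icc_subset_Icc (by omega) (by omega)

lemma mem_cube_of_znorm_lt {M : ℕ} {b : Fin 3 → ℤ} (hb : znorm b < M + 1) : b ∈ cube M := by
  simp only [cube, Fintype.mem_piFinset, mem_Icc, ← abs_le]
  intro i
  have : ((|b i| : ℤ) : ℝ) < (M : ℤ) + 1 := by
    push_cast
    exact (abs_le_znorm b i).trans_lt hb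
  exact Int.lt_add_one_iff.mp (by exact_mod_cast this)

-- `(2M + 3)³ - (2M + 1)³ = 24(M + 1)² + 2`
lemma card_cube_succ_sdiff_le (M : ℕ) : #(cube (M + 1) \ cube M) ≤ 26 * (M + 1) ^ 2 := by
  have h := card_sdiff_add_card_eq_card (cube_mono (Nat.le_add_right M 1))
  rw [card_cube, card_cube] at h
  ring_nf at h ⊢
  omega

lemma sum_cube_inv_znorm_le (M : ℕ) : ∑ b ∈ cube M, (znorm b)⁻¹ ≤ 26 * (M : ℝ) ^ 2 := by
  induction M with
  | zero =>
    -- the origin contributes the junk value `(znorm 0)⁻¹ = 0`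
    simp [cube, znorm]
  | succ M ih =>
    have hshell : ∑ b ∈ cube (M + 1) \ cube M, (znorm b)⁻¹ ≤ 26 * ((M : ℝ) + 1) := by
      calc ∑ b ∈ cube (M + 1) \ cube M, (znorm b)⁻¹
          ≤ #(cube (M + 1) \ cube M) • ((M : ℝ) + 1)⁻¹ := by
            refine sum_le_card_nsmul _ _ _ fun b hb => ?_
            refine inv_anti₀ (by positivity) (not_lt.mp fun h => ?_)
            exact (mem_sdiff.mp hb).2 (mem_cube_of_znorm_lt h)
        _ ≤ 26 * ((M : ℝ) + 1) ^ 2 * ((M : ℝ) + 1)⁻¹ := by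
            rw [nsmul_eq_mul]
            gcongr
            exact_mod_cast card_cube_succ_sdiff_le M
        _ = 26 * ((M : ℝ) + 1) := by field_simp
    rw [← sum_sdiff (cube_mono M.le_succ)]
    push_cast
    nlinarith

lemma sum_inv_znorm_le {R : ℝ} (hR : 0 ≤ R) (t : Finset (Fin 3 → ℤ))
    (ht : ∀ b ∈ t, znorm b ≤ R) : ∑ b ∈ t, (znorm b)⁻¹ ≤ 26 * R ^ 2 := by
  have hsub : t ⊆ cube ⌊R⌋₊ := fun b hb =>
    mem_cube_of_znorm_lt ((ht b hb).trans_lt (Nat.lt_floor_add_one R))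
  calc ∑ b ∈ t, (znorm b)⁻¹
      ≤ ∑ b ∈ cube ⌊R⌋₊, (znorm b)⁻¹ :=
        sum_le_sum_of_subset_of_nonneg hsub fun b _ _ => inv_nonneg.mpr (znorm_nonneg b)
    _ ≤ 26 * (⌊R⌋₊ : ℝ) ^ 2 := sum_cube_inv_znorm_le _
    _ ≤ 26 * R ^ 2 := by gcongr; exact Nat.floor_le hR

lemma sum_norm_le_of_znorm_le {E : Type*} [SeminormedAddCommGroup E] {u : (Fin 3 → ℤ) → E}
    {L R : ℝ} (hsum : Summable fun α : {a : Fin 3 → ℤ // a ≠ 0} => znorm α.1 * ‖u α.1‖ ^ 2)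
    (hL : ∑' α : {a : Fin 3 → ℤ // a ≠ 0}, znorm α.1 * ‖u α.1‖ ^ 2 ≤ L) (hR : 0 ≤ R)
    (t : Finset (Fin 3 → ℤ)) (ht : ∀ b ∈ t, 0 < znorm b ∧ znorm b ≤ R) :
    ∑ b ∈ t, ‖u b‖ ≤ √L * (√26 * R) := by
  have hweight : ∀ b ∈ t, √(znorm b * ‖u b‖ ^ 2) * √(znorm b)⁻¹ = ‖u b‖ := by
    intro b hb
    rw [← Real.sqrt_mul (mul_nonneg (znorm_nonneg b) (sq_nonneg _)), mul_right_comm,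
      mul_inv_cancel₀ (ht b hb).1.ne', one_mul, Real.sqrt_sq (norm_nonneg _)]
  have hne : ∀ b ∈ t, b ≠ 0 := fun b hb h0 => by
    simpa [h0, znorm_zero] using (ht b hb).1
  have henergy : ∑ b ∈ t, znorm b * ‖u b‖ ^ 2 ≤ L := by
    rw [← sum_subtype_of_mem _ hne]
    exact (hsum.sum_le_tsum _ fun b _ => mul_nonneg (znorm_nonneg _) (sq_nonneg _)).trans hL
  calc ∑ b ∈ t, ‖u b‖
      = ∑ b ∈ t, √(znorm b * ‖u b‖ ^ 2) * √(znorm b)⁻¹ := (sum_congr rfl hweight).symm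
    _ ≤ √(∑ b ∈ t, znorm b * ‖u b‖ ^ 2) * √(∑ b ∈ t, (znorm b)⁻¹) :=
        Real.sum_sqrt_mul_sqrt_le t (fun b => by have := znorm_nonneg b; positivity)
          fun b => inv_nonneg.mpr (znorm_nonneg b)
    _ ≤ √L * √(26 * R ^ 2) := by
        gcongr
        exact sum_inv_znorm_le hR t fun b hb => (ht b hb).2
    _ = √L * (√26 * R) := by rw [Real.sqrt_mul (by norm_num), Real.sqrt_sq hR]

lemma Real.half_mul_rpow_le_rpow_of_le_two_mul {θ x y : ℝ} (hθ0 : 0 ≤ θ) (hθ1 : θ ≤ 1)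
    (hx : 0 ≤ x) (hxy : x ≤ 2 * y) : 1 / 2 * x ^ θ ≤ y ^ θ := by
  have hy : 0 ≤ y := by linarith
  have htwo : (2 : ℝ) ^ θ ≤ 2 := by
    simpa using Real.rpow_le_rpow_of_exponent_le (by norm_num : (1 : ℝ) ≤ 2) hθ1
  calc 1 / 2 * x ^ θ ≤ 1 / 2 * (2 * y) ^ θ := by gcongr
    _ = 1 / 2 * (2 ^ θ * y ^ θ) := by rw [Real.mul_rpow (by norm_num) hy]
    _ ≤ 1 / 2 * (2 * y ^ θ) := by gcongr
    _ = y ^ θ := by ring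

lemma Real.mul_le_div_rpow_of_le_div_rpow {γ D x v : ℝ} (hx : 0 < x)
    (hv : v ≤ D / x ^ (2 - γ)) : x * v ≤ D / x ^ (1 - γ) := by
  have hsplit : x ^ (2 - γ) = x * x ^ (1 - γ) := by
    rw [show 2 - γ = 1 + (1 - γ) by ring, Real.rpow_add hx, Real.rpow_one]
  rw [hsplit, div_mul_eq_div_div_swap] at hv
  rwa [le_div_iff₀ hx, mul_comm] at hv

lemma znorm_mul_norm_le_of_znorm_sub_le {E : Type*} [SeminormedAddCommGroup E]
    {u : (Fin 3 → ℤ) → E} {γ D K : ℝ} (hγ0 : 0 ≤ γ) (hγ1 : γ ≤ 1) (hD : 0 ≤ D)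
    (hdecay : ∀ α, K ≤ znorm α → ‖u α‖ ≤ D / znorm α ^ ((2 : ℝ) - γ)) {k α : Fin 3 → ℤ}
    (hk1 : 1 ≤ znorm k) (hkK : 2 * K ≤ znorm k)
    (hα : znorm (k - α) ≤ 1 / 2 * znorm k ^ ((1 : ℝ) - γ)) :
    znorm α * ‖u α‖ ≤ D / (1 / 2 * znorm k ^ ((1 : ℝ) - γ)) := by
  have hkγ : znorm k ^ ((1 : ℝ) - γ) ≤ znorm k := by
    simpa using Real.rpow_le_rpow_of_exponent_le hk1 (by linarith : (1 : ℝ) - γ ≤ 1)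
  have hkα : znorm k ≤ 2 * znorm α := by linarith [znorm_le_znorm_sub_add k α]
  have hαpos : 0 < znorm α := by linarith
  have hRpos : 0 < 1 / 2 * znorm k ^ ((1 : ℝ) - γ) := by
    have := Real.rpow_pos_of_pos (by linarith : 0 < znorm k) (1 - γ)
    positivity
  calc znorm α * ‖u α‖ ≤ D / znorm α ^ ((1 : ℝ) - γ) :=
        Real.mul_le_div_rpow_of_le_div_rpow hαpos (hdecay α (by linarith))
    _ ≤ D / (1 / 2 * znorm k ^ ((1 : ℝ) - γ)) :=
        div_le_div_of_nonneg_left hD hRpos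
          (Real.half_mul_rpow_le_rpow_of_le_two_mul (by linarith) (by linarith) (by linarith) hkα)

/-- There is a constant `c ≥ 1` such that: for every `γ ∈ (0,1]`, `L₀ > 0`, `D > 0`, `K ≥ 1`,
every `u : ℤ³ → ℂ` with `u 0 = 0`, `∑_{α ≠ 0} |α||u α|² ≤ L₀`, and
`|u α| ≤ D/|α|^{2−γ}` for `|α| ≥ K`, and every `k` with `|k| ≥ 2K`,
`∑_{α ≠ 0, 0 < |k−α| ≤ (1/2)|k|^{1−γ}} |α||u α||u (k−α)| ≤ c·√L₀·D`. -/
theorem bootstrap_piece_II_bound :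
    ∃ c : ℝ, 1 ≤ c ∧
      ∀ (γ : ℝ), 0 < γ → γ ≤ 1 →
      ∀ (L₀ D K : ℝ), 0 < L₀ → 0 < D → 1 ≤ K →
      ∀ u : (Fin 3 → ℤ) → ℂ, u 0 = 0 →
        Summable (fun α : {a : Fin 3 → ℤ // a ≠ 0} => znorm α.1 * ‖u α.1‖ ^ 2) →
        (∑' α : {a : Fin 3 → ℤ // a ≠ 0}, znorm α.1 * ‖u α.1‖ ^ 2) ≤ L₀ →
        (∀ α : Fin 3 → ℤ, K ≤ znorm α → ‖u α‖ ≤ D / znorm α ^ ((2 : ℝ) - γ)) →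
        ∀ k : Fin 3 → ℤ, 2 * K ≤ znorm k →
          (∑' α : {a : Fin 3 → ℤ //
              a ≠ 0 ∧ 0 < znorm (k - a) ∧
                znorm (k - a) ≤ (1 / 2) * znorm k ^ ((1 : ℝ) - γ)},
            znorm α.1 * ‖u α.1‖ * ‖u (k - α.1)‖)
            ≤ c * Real.sqrt L₀ * D := by
  refine ⟨√26, Real.one_le_sqrt.mpr (by norm_num), ?_⟩
  intro γ hγ0 hγ1 L₀ D K _ hD hK u _ hsum hL hdecay k hk
  set R := 1 / 2 * znorm k ^ ((1 : ℝ) - γ)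
  have hR : 0 < R := by
    have := Real.rpow_pos_of_pos (by linarith : 0 < znorm k) (1 - γ)
    positivity
  refine tsum_le_of_sum_le' (by positivity) fun s => ?_
  have hinj : Set.InjOn (fun α : {a // a ≠ 0 ∧ 0 < znorm (k - a) ∧ znorm (k - a) ≤ R} => k - α.1)
      s := fun α _ β _ h => Subtype.ext (sub_right_injective h)
  calc ∑ α ∈ s, znorm α.1 * ‖u α.1‖ * ‖u (k - α.1)‖
      ≤ ∑ α ∈ s, D / R * ‖u (k - α.1)‖ := sum_le_sum fun α _ => by
        gcongr
        exact znorm_mul_norm_le_of_znorm_sub_le hγ0.le hγ1 hD.le hdecay (by linarith) hk α.2.2.2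
    _ = D / R * ∑ b ∈ s.image fun α => k - α.1, ‖u b‖ := by rw [sum_image hinj, mul_sum]
    _ ≤ D / R * (√L₀ * (√26 * R)) := by
        gcongr
        refine sum_norm_le_of_znorm_le hsum hL hR.le _ ?_
        simp only [mem_image]
        rintro _ ⟨α, -, rfl⟩
        exact α.2.2
    _ = √26 * √L₀ * D := by field_simp
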